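/- Let Σ be a 2-dimensional submanifold of a Riemannian 4-manifold M = M₁ × M₂, where M₁ and M₂ are surfaces of constant curvature −1, such that Σ is minimal (the mean curvature vectors vanish: tr II = 0) and the projections of Σ to both factors are immersions. Then the sectional (Gaussian) curvature of Σ is strictly negative at every point. -/
import Mathlib

open scoped RealInnerProductSpace

lemma strict_cauchy_schwarz {V : Type*} [NormedAddCommGroup V] [InnerProductSpace ℝ V]
    {x y : V} (h : LinearIndependent ℝ ![x, y]) : ⟪x, y⟫ ^ 2 < ‖x‖ ^ 2 * ‖y‖ ^ 2 := by
  rw [LinearIndependent.pair_iff] at h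
  have hx : x ≠ 0 := by
    intro hx0
    have := (h 1 0 (by simp [hx0])).1
    norm_num at this
  have hy : y ≠ 0 := by
    intro hy0
    have := (h 0 1 (by simp [hy0])).2
    norm_num at this
  have hxn : (0:ℝ) < ‖x‖ := norm_pos_iff.mpr hx
  have hyn : (0:ℝ) < ‖y‖ := norm_pos_iff.mpr hy
  have h1 : ‖y‖ • x ≠ ‖x‖ • y := by
    intro he
    have := (h ‖y‖ (-‖x‖) (by rw [neg_smul, ← he]; abel)).1
    exact hyn.ne' this
  have h2 : ‖y‖ • (-x) ≠ ‖-x‖ • y := by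
    intro he
    rw [norm_neg, smul_neg] at he
    have := (h (-‖y‖) (-‖x‖) (by rw [neg_smul, neg_smul, ← he]; abel)).1
    simpa using hyn.ne' (neg_eq_zero.mp this)
  have c1 : ⟪x, y⟫ < ‖x‖ * ‖y‖ := inner_lt_norm_mul_iff_real.mpr h1
  have c2 : ⟪-x, y⟫ < ‖-x‖ * ‖y‖ := inner_lt_norm_mul_iff_real.mpr h2
  rw [inner_neg_left, norm_neg] at c2
  have habs : |⟪x, y⟫| < ‖x‖ * ‖y‖ := abs_lt.mpr ⟨by linarith, c1⟩
  calc ⟪x, y⟫ ^ 2 = |⟪x, y⟫| ^ 2 := (sq_abs _).symm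
    _ < (‖x‖ * ‖y‖) ^ 2 := by
        apply pow_lt_pow_left₀ habs (abs_nonneg _)
        norm_num
    _ = ‖x‖ ^ 2 * ‖y‖ ^ 2 := by ring

/-- Pointwise Gauss-equation argument: for a minimal surface in a product of two
hyperbolic planes whose projections to both factors are immersions, the Gaussian
curvature is strictly negative. Here `X = X₁ ⊕ X₂`, `Y = Y₁ ⊕ Y₂` is an orthonormal
basis of the tangent plane, `II` the second fundamental form, and the Gauss equation
and minimality (`tr II = 0`) are encoded as hypotheses. -/
theorem minimal_surface_neg_curvature {V₁ V₂ N : Type*}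
    [NormedAddCommGroup V₁] [InnerProductSpace ℝ V₁]
    [NormedAddCommGroup V₂] [InnerProductSpace ℝ V₂]
    [NormedAddCommGroup N] [InnerProductSpace ℝ N]
    (K : ℝ) (X₁ Y₁ : V₁) (X₂ Y₂ : V₂) (IIXX IIXY IIYY : N)
    (hmin : IIXX + IIYY = 0)
    (hGauss : K = (-(‖X₁‖ ^ 2 * ‖Y₁‖ ^ 2 - ⟪X₁, Y₁⟫ ^ 2)
        - (‖X₂‖ ^ 2 * ‖Y₂‖ ^ 2 - ⟪X₂, Y₂⟫ ^ 2))
      + ⟪IIXX, IIYY⟫ - ‖IIXY‖ ^ 2)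
    (h1 : LinearIndependent ℝ ![X₁, Y₁])
    (h2 : LinearIndependent ℝ ![X₂, Y₂]) :
    K < 0 := by
  have hYY : IIYY = -IIXX := by linear_combination (norm := abel) hmin
  have hip : ⟪IIXX, IIYY⟫ = -‖IIXX‖ ^ 2 := by
    rw [hYY, inner_neg_right, real_inner_self_eq_norm_sq]
  have cs1 := strict_cauchy_schwarz h1
  have cs2 := strict_cauchy_schwarz h2
  have hn1 : (0:ℝ) ≤ ‖IIXX‖ ^ 2 := sq_nonneg _
  have hn2 : (0:ℝ) ≤ ‖IIXY‖ ^ 2 := sq_nonneg _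
  rw [hGauss, hip]
  linarith
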